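/- Define σ : ℂ × ℂ³ → ℂ³ by σ_t(x₁,x₂,x₃) := (x₁, x₂ − t x₁², x₃ + t(1 − x₁x₂) + t² x₁³/2). Then σ is an action of the additive group (ℂ,+) on ℂ³ (σ_0 = id and σ_s ∘ σ_t = σ_{s+t}), the action is free (σ_t(x) = x implies t = 0 for every x ∈ ℂ³), and the action is proper: the map ℂ × ℂ³ → ℂ³ × ℂ³, (t, x) ↦ (x, σ_t(x)), is a proper map, i.e., the preimage of every compact set is compact. -/

import Mathlib

/-- The action of `(ℂ,+)` on `ℂ³` induced by the locally nilpotent derivation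
`δ = −x₁² ∂/∂x₂ + (1 − x₁x₂) ∂/∂x₃`. -/
noncomputable def sigma3 (t : ℂ) (x : Fin 3 → ℂ) : Fin 3 → ℂ :=
  ![x 0, x 1 - t * (x 0) ^ 2, x 2 + t * (1 - x 0 * x 1) + t ^ 2 * (x 0) ^ 3 / 2]

lemma sigma3_bound (C : ℝ) (hC : 1 ≤ C) (t : ℂ) (x : Fin 3 → ℂ)
    (hx : ∀ i, ‖x i‖ ≤ C) (hy : ∀ i, ‖sigma3 t x i‖ ≤ C) : ‖t‖ ≤ 32 * C ^ 3 := by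
  have hy1 : ‖x 1 - t * (x 0) ^ 2‖ ≤ C := by have := hy 1; simpa [sigma3] using this
  have hy2 : ‖x 2 + t * (1 - x 0 * x 1) + t ^ 2 * (x 0) ^ 3 / 2‖ ≤ C := by
    have := hy 2; simpa [sigma3] using this
  set u := ‖t‖ with hu
  set v := ‖x 0‖ with hv
  set w := ‖x 1‖ with hw
  have hun : 0 ≤ u := norm_nonneg _
  have hvn : 0 ≤ v := norm_nonneg _
  have hwn : 0 ≤ w := norm_nonneg _
  have hwC : w ≤ C := hx 1
  have h1 : u * v ^ 2 ≤ 2 * C := by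
    have : ‖t * (x 0) ^ 2‖ ≤ 2 * C := by
      have e : t * (x 0) ^ 2 = x 1 - (x 1 - t * (x 0) ^ 2) := by ring
      rw [e]
      calc ‖x 1 - (x 1 - t * (x 0) ^ 2)‖ ≤ ‖x 1‖ + ‖x 1 - t * (x 0) ^ 2‖ := norm_sub_le _ _
        _ ≤ C + C := add_le_add (hx 1) hy1
        _ = 2 * C := by ring
    simpa [norm_mul, norm_pow] using this
  have h2 : u ≤ 2 * C + u * v * w + u ^ 2 * v ^ 3 / 2 := by
    have hA : ‖t * (1 - x 0 * x 1) + t ^ 2 * (x 0) ^ 3 / 2‖ ≤ 2 * C := by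
      have e : t * (1 - x 0 * x 1) + t ^ 2 * (x 0) ^ 3 / 2 =
          (x 2 + t * (1 - x 0 * x 1) + t ^ 2 * (x 0) ^ 3 / 2) - x 2 := by ring
      rw [e]
      calc ‖_ - x 2‖ ≤ ‖x 2 + t * (1 - x 0 * x 1) + t ^ 2 * (x 0) ^ 3 / 2‖ + ‖x 2‖ :=
            norm_sub_le _ _
        _ ≤ C + C := add_le_add hy2 (hx 2)
        _ = 2 * C := by ring
    have e2 : t = (t * (1 - x 0 * x 1) + t ^ 2 * (x 0) ^ 3 / 2)
        + t * (x 0) * (x 1) - t ^ 2 * (x 0) ^ 3 / 2 := by ring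
    calc u = ‖(t * (1 - x 0 * x 1) + t ^ 2 * (x 0) ^ 3 / 2)
        + t * (x 0) * (x 1) - t ^ 2 * (x 0) ^ 3 / 2‖ := by rw [hu]; exact congrArg Norm.norm e2
      _ ≤ ‖(t * (1 - x 0 * x 1) + t ^ 2 * (x 0) ^ 3 / 2) + t * (x 0) * (x 1)‖
            + ‖t ^ 2 * (x 0) ^ 3 / 2‖ := norm_sub_le _ _
      _ ≤ ‖t * (1 - x 0 * x 1) + t ^ 2 * (x 0) ^ 3 / 2‖ + ‖t * (x 0) * (x 1)‖
            + ‖t ^ 2 * (x 0) ^ 3 / 2‖ :=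
            add_le_add_left (norm_add_le _ _) _
      _ ≤ 2 * C + u * v * w + u ^ 2 * v ^ 3 / 2 := by
            have e3 : ‖t * (x 0) * (x 1)‖ = u * v * w := by simp [norm_mul, hu, hv, hw]
            have e4 : ‖t ^ 2 * (x 0) ^ 3 / 2‖ = u ^ 2 * v ^ 3 / 2 := by
              simp [norm_div, norm_mul, norm_pow, hu, hv]
            rw [e3, e4]
            gcongr
  -- combine: u ≤ 2C + 2C u v, u v² ≤ 2C
  have h3 : u ≤ 2 * C + 2 * C * (u * v) := by
    nlinarith [mul_nonneg hun hvn, mul_nonneg (mul_nonneg hun hvn) hvn,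
      mul_le_mul_of_nonneg_left h1 (mul_nonneg hun hvn)]
  have hCpos : (0:ℝ) < C := by linarith
  have hC3 : C ≤ C ^ 3 := by
    nlinarith [mul_nonneg (mul_nonneg (sub_nonneg.2 hC) (show (0:ℝ) ≤ C + 1 by linarith))
      (show (0:ℝ) ≤ C by linarith)]
  rcases le_or_gt v (1 / (4 * C)) with hvs | hvs
  · have h4 : 2 * C * (u * v) ≤ u / 2 := by
      have h5 : u * v ≤ u * (1 / (4 * C)) := mul_le_mul_of_nonneg_left hvs hun
      calc 2 * C * (u * v) ≤ 2 * C * (u * (1 / (4 * C))) := by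
            exact mul_le_mul_of_nonneg_left h5 (by positivity)
        _ = u / 2 := by field_simp; ring
    linarith
  · have hv4 : 1 < v * (4 * C) := (div_lt_iff₀ (by positivity)).1 hvs
    have h16 : 1 ≤ (v * (4 * C)) * (v * (4 * C)) := by nlinarith
    nlinarith [mul_le_mul_of_nonneg_left h1 (show (0:ℝ) ≤ 16 * C ^ 2 by positivity),
      mul_le_mul_of_nonneg_left h16 hun]

/-- `σ` is an action of `(ℂ,+)` on `ℂ³`, the action is free, and the
action is proper: `(t,x) ↦ (x, σ_t(x))` has compact preimages of compact sets. -/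
theorem sigma3_is_free_proper_additive_action :
    (∀ x : Fin 3 → ℂ, sigma3 0 x = x) ∧
    (∀ (s t : ℂ) (x : Fin 3 → ℂ), sigma3 s (sigma3 t x) = sigma3 (s + t) x) ∧
    (∀ (t : ℂ) (x : Fin 3 → ℂ), sigma3 t x = x → t = 0) ∧
    (∀ K : Set ((Fin 3 → ℂ) × (Fin 3 → ℂ)), IsCompact K →
      IsCompact ((fun tx : ℂ × (Fin 3 → ℂ) => (tx.2, sigma3 tx.1 tx.2)) ⁻¹' K)) := by
  refine ⟨?_, ?_, ?_, ?_⟩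
  · intro x
    funext i
    fin_cases i <;> simp [sigma3]
  · intro s t x
    funext i
    fin_cases i <;> simp [sigma3] <;> ring
  · intro t x h
    have h1 := congrFun h 1
    have h2 := congrFun h 2
    simp [sigma3] at h1 h2
    rcases h1 with ht | hx0
    · exact ht
    · rw [hx0] at h2
      simpa using h2
  · intro K hK
    have hcont : Continuous (fun tx : ℂ × (Fin 3 → ℂ) => (tx.2, sigma3 tx.1 tx.2)) := by
      refine Continuous.prodMk continuous_snd ?_
      apply continuous_pi
      intro i
      fin_cases i <;> simp [sigma3] <;> fun_prop
    have hclosed : IsClosed ((fun tx : ℂ × (Fin 3 → ℂ) => (tx.2, sigma3 tx.1 tx.2)) ⁻¹' K) :=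
      hK.isClosed.preimage hcont
    obtain ⟨C0, hC0⟩ := hK.isBounded.exists_norm_le
    set C := max C0 1 with hC
    have hC1 : (1:ℝ) ≤ C := le_max_right _ _
    have hbdd : Bornology.IsBounded
        ((fun tx : ℂ × (Fin 3 → ℂ) => (tx.2, sigma3 tx.1 tx.2)) ⁻¹' K) := by
      rw [isBounded_iff_forall_norm_le]
      refine ⟨32 * C ^ 3, ?_⟩
      rintro ⟨t, x⟩ hmem
      have hmem' : (x, sigma3 t x) ∈ K := hmem
      have hn := hC0 _ hmem'
      rw [Prod.norm_def] at hn
      have hxn : ‖x‖ ≤ C := le_trans (le_trans (le_max_left _ _) hn) (le_max_left _ _)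
      have hyn : ‖sigma3 t x‖ ≤ C := le_trans (le_trans (le_max_right _ _) hn) (le_max_left _ _)
      have ht : ‖t‖ ≤ 32 * C ^ 3 :=
        sigma3_bound C hC1 t x (fun i => le_trans (norm_le_pi_norm x i) hxn)
          (fun i => le_trans (norm_le_pi_norm (sigma3 t x) i) hyn)
      have hxC : ‖x‖ ≤ 32 * C ^ 3 := le_trans hxn (by
        nlinarith [mul_nonneg (mul_nonneg (sub_nonneg.2 hC1) (show (0:ℝ) ≤ C + 1 by linarith))
          (show (0:ℝ) ≤ C by linarith)])
      rw [Prod.norm_def]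
      exact max_le ht hxC
    exact Metric.isCompact_of_isClosed_isBounded hclosed hbdd
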